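/- arXiv:1805.02879 — 6 statements merged into one kernel-verified Lean document; each statement's English description precedes it below -/
import Mathlib

section
/- Let A = ⟨Q, Σ⟩ be a DFA such that the graph Γ₁(A) is strongly connected. Then A is completely reachable; more precisely, for every non-empty subset P ⊆ Q there is a word w that is a product of words of defect 1 (possibly the empty product, i.e., the empty word) such that P = Q·w. -/
/-!
Framework: complete deterministic finite automata, reachability of subsets,
defect/excluded/duplicate states of words, and the layered graphs
`Γ₁(A), Γ₂(A), …` of Bondar & Volkov, "A Characterization of Completely
Reachable Automata".
-/

/-- The action of a word on a state: `q · w`. -/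
def actWord {Q σ : Type*} (δ : Q → σ → Q) (w : List σ) (q : Q) : Q :=
  w.foldl δ q

/-- The image of a set of states under a word: `P · w`. -/
def actSet {Q σ : Type*} (δ : Q → σ → Q) (w : List σ) (P : Set Q) : Set Q :=
  actWord δ w '' P

/-- The set `excl(w) = Q \ Q·w` of excluded states of the word `w`. -/
def excl {Q σ : Type*} (δ : Q → σ → Q) (w : List σ) : Set Q :=
  Set.univ \ actSet δ w Set.univ

/-- The defect of the word `w`, i.e. `|Q \ Q·w|`. -/
noncomputable def defect {Q σ : Type*} (δ : Q → σ → Q) (w : List σ) : ℕ :=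
  (excl δ w).ncard

/-- The set `dupl(w)` of duplicate states of the word `w`. -/
def dupl {Q σ : Type*} (δ : Q → σ → Q) (w : List σ) : Set Q :=
  {p | ∃ q₁ q₂ : Q, q₁ ≠ q₂ ∧ actWord δ w q₁ = p ∧ actWord δ w q₂ = p}

/-- A subset `P ⊆ Q` is reachable if `P = Q·w` for some word `w`. -/
def reachableSubset {Q σ : Type*} (δ : Q → σ → Q) (P : Set Q) : Prop :=
  ∃ w : List σ, actSet δ w Set.univ = P

/-- A DFA is completely reachable if every nonempty subset of states is reachable. -/
def completelyReachable {Q σ : Type*} (δ : Q → σ → Q) : Prop :=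
  ∀ P : Set Q, P.Nonempty → reachableSubset δ P

/-- A directed graph given by a vertex set and an edge relation. -/
structure DGraph (V : Type*) where
  verts : Set V
  edge : V → V → Prop

/-- Reachability by a directed path in a graph. -/
def GReach {V : Type*} (G : DGraph V) : V → V → Prop :=
  Relation.ReflTransGen G.edge

/-- A graph is strongly connected if each of its vertices is reachable from
any other one. -/
def StronglyConnected {V : Type*} (G : DGraph V) : Prop :=
  ∀ u ∈ G.verts, ∀ v ∈ G.verts, GReach G u v

/-- The strongly connected component of the vertex `v`: all vertices mutually
reachable with `v`. -/
def scc {V : Type*} (G : DGraph V) (v : V) : Set V :=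
  {u | u ∈ G.verts ∧ GReach G u v ∧ GReach G v u}

/-- Vertices of the layered graphs: states (`Sum.inl`) and subsets of states
(`Sum.inr`). -/
abbrev Vtx (Q : Type*) := Q ⊕ Set Q

/-- The support of a set of vertices: the states belonging to it. -/
def support {Q : Type*} (S : Set (Vtx Q)) : Set Q :=
  {q | Sum.inl q ∈ S}

/-- The graph `Γ₁(A)`: vertices are the states, and there is an edge
`(excl w, dupl w)` for each word `w` of defect 1. -/
def Gamma1 {Q σ : Type*} (δ : Q → σ → Q) : DGraph (Vtx Q) where
  verts := Set.range Sum.inl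
  edge := fun u v => ∃ q p : Q, u = Sum.inl q ∧ v = Sum.inl p ∧
    ∃ w : List σ, defect δ w = 1 ∧ excl δ w = {q} ∧ p ∈ dupl δ w

/-- `Qnext G k`: the collection of the supports of all SCCs of `G` of rank
at least `k` (this is the set `Q_k` when `G = Γ_{k-1}(A)`). -/
def Qnext {Q : Type*} (G : DGraph (Vtx Q)) (k : ℕ) : Set (Set Q) :=
  {C | ∃ v ∈ G.verts, C = support (scc G v) ∧ k ≤ C.ncard}

/-- One step of the iterative construction: from `G = Γ_{k-1}(A)` build
`Γ_k(A)` by adding the new vertices `Q_k`, the inclusion edges `I_k`, and the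
edges `E_k` enforced by words of defect `k`. -/
def step {Q σ : Type*} (δ : Q → σ → Q) (G : DGraph (Vtx Q)) (k : ℕ) :
    DGraph (Vtx Q) where
  verts := G.verts ∪ Sum.inr '' Qnext G k
  edge := fun u v =>
    G.edge u v ∨
    (∃ C ∈ Qnext G k, v = Sum.inr C ∧
      ((∃ q : Q, u = Sum.inl q ∧ q ∈ C) ∨
       (∃ D : Set Q, u = Sum.inr D ∧ Sum.inr D ∈ G.verts ∧ D ⊂ C))) ∨
    (∃ C ∈ Qnext G k, ∃ p : Q, u = Sum.inr C ∧ v = Sum.inl p ∧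
      ∃ w : List σ, defect δ w = k ∧ excl δ w ⊆ C ∧ p ∈ dupl δ w)

/-- The layered graphs `Γ_k(A)` (with `Γ_0 := Γ_1`). -/
def Gamma {Q σ : Type*} (δ : Q → σ → Q) : ℕ → DGraph (Vtx Q)
  | 0 => Gamma1 δ
  | 1 => Gamma1 δ
  | (k + 2) => step δ (Gamma δ (k + 1)) (k + 2)

/-- The FAILURE condition at step `k`: every SCC of `Γ_k(A)` has rank at
most `k`. -/
def failsAt {Q σ : Type*} (δ : Q → σ → Q) (k : ℕ) : Prop :=
  ∀ v ∈ (Gamma δ k).verts, (support (scc (Gamma δ k) v)).ncard ≤ k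

/-- The iterative construction stops at step `k` (so `Γ(A) = Γ_k(A)`):
`k` is the first index at which `Γ_k(A)` is strongly connected (SUCCESS) or
every SCC of `Γ_k(A)` has rank at most `k` (FAILURE). -/
def stopsAt {Q σ : Type*} (δ : Q → σ → Q) (k : ℕ) : Prop :=
  1 ≤ k ∧ (StronglyConnected (Gamma δ k) ∨ failsAt δ k) ∧
    ∀ j, 1 ≤ j → j < k → ¬ StronglyConnected (Gamma δ j) ∧ ¬ failsAt δ j

/-!
If `Γ₁(A)` is strongly connected and `∅ ≠ P ≠ Q`, some edge of `Γ₁(A)` goes from `Q ∖ P` into `P`: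
there is a word `w` of defect 1 with `excl(w) ∉ P` and `dupl(w) ∈ P`. Then `P ⊆ Q·w`, so
`P = P'·w` for the preimage `P'` of `P` under `w`, and `P'` is strictly larger than `P`
because `dupl(w)` has two preimages. Induction on `|Q ∖ P|` finishes the proof.
-/

theorem Relation.ReflTransGen.exists_notMem_mem {α : Type*}
    {r : α → α → Prop} {S : Set α} {a b : α} (hab : Relation.ReflTransGen r a b)
    (ha : a ∉ S) (hb : b ∈ S) : ∃ x y, x ∉ S ∧ y ∈ S ∧ r x y := by
  induction hab with
  | refl => exact absurd hb ha
  | @tail c d _ hcd ih =>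
    by_cases hc : c ∈ S
    · exact ih hc
    · exact ⟨c, d, hc, hb, hcd⟩

theorem Set.ncard_lt_ncard_preimage {α β : Type*} [Finite α] {f : α → β} {P : Set β}
    (hP : P ⊆ Set.range f) {x₁ x₂ : α} (hne : x₁ ≠ x₂) (heq : f x₁ = f x₂) (hx : f x₁ ∈ P) :
    P.ncard < (f ⁻¹' P).ncard := by
  have himage : f '' (f ⁻¹' P) = P := Set.image_preimage_eq_of_subset hP
  have hle : P.ncard ≤ (f ⁻¹' P).ncard := by
    simpa only [himage] using Set.ncard_image_le (f := f) (Set.toFinite (f ⁻¹' P))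
  refine lt_of_le_of_ne hle fun hcard => hne ?_
  have hinj : Set.InjOn f (f ⁻¹' P) := Set.injOn_of_ncard_image_eq (by rw [himage, hcard])
  exact hinj hx (show f x₂ ∈ P from heq ▸ hx) heq

theorem Set.ncard_compl_preimage_lt {α : Type*} [Finite α] {f : α → α} {P : Set α}
    (hP : P ⊆ Set.range f) {x₁ x₂ : α} (hne : x₁ ≠ x₂) (heq : f x₁ = f x₂) (hx : f x₁ ∈ P) :
    (f ⁻¹' P)ᶜ.ncard < Pᶜ.ncard := by
  have := Set.ncard_lt_ncard_preimage hP hne heq hx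
  have := Set.ncard_add_ncard_compl P
  have := Set.ncard_add_ncard_compl (f ⁻¹' P)
  omega

section Automaton

variable {Q σ : Type*} (δ : Q → σ → Q)

theorem actSet_nil (P : Set Q) : actSet δ [] P = P :=
  Set.image_id P

theorem actWord_append (u v : List σ) (q : Q) :
    actWord δ (u ++ v) q = actWord δ v (actWord δ u q) :=
  List.foldl_append

theorem actSet_append (u v : List σ) (P : Set Q) :
    actSet δ (u ++ v) P = actSet δ v (actSet δ u P) := by
  simp only [actSet, Set.image_image, actWord_append]

theorem subset_range_actWord {w : List σ} {P : Set Q} (h : Disjoint P (excl δ w)) :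
    P ⊆ Set.range (actWord δ w) := fun p hp => by
  by_contra hp'
  exact h.ne_of_mem hp ⟨Set.mem_univ p, by simpa [actSet] using hp'⟩ rfl

theorem exists_defect_one_word_disjoint_excl_dupl_mem (h : StronglyConnected (Gamma1 δ))
    {P : Set Q} {p q : Q} (hp : p ∈ P) (hq : q ∉ P) :
    ∃ w : List σ, defect δ w = 1 ∧ Disjoint P (excl δ w) ∧ ∃ p' ∈ P, p' ∈ dupl δ w := by
  obtain ⟨x, y, hx, hy, q', p', rfl, rfl, w, hw, hexcl, hdupl⟩ :=
    (h (Sum.inl q) ⟨q, rfl⟩ (Sum.inl p) ⟨p, rfl⟩).exists_notMem_mem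
      (S := Sum.inl '' P) (by simpa using hq) (Set.mem_image_of_mem _ hp)
  refine ⟨w, hw, ?_, p', by simpa using hy, hdupl⟩
  rw [hexcl, Set.disjoint_singleton_right]
  simpa using hx

theorem exists_defect_one_words_of_stronglyConnected [Finite Q]
    (h : StronglyConnected (Gamma1 δ)) (P : Set Q) (hP : P.Nonempty) :
    ∃ ws : List (List σ), (∀ u ∈ ws, defect δ u = 1) ∧ actSet δ ws.flatten Set.univ = P := by
  induction hn : Pᶜ.ncard using Nat.strong_induction_on generalizing P with
  | _ n ih =>
  obtain hPu | ⟨q, hq⟩ := Pᶜ.eq_empty_or_nonempty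
  · refine ⟨[], by simp, ?_⟩
    rw [List.flatten_nil, actSet_nil, ← compl_compl P, hPu, Set.compl_empty]
  obtain ⟨p, hp⟩ := hP
  obtain ⟨w, hw, hdisj, _, hp', x₁, x₂, hne, hx₁, hx₂⟩ :=
    exists_defect_one_word_disjoint_excl_dupl_mem δ h hp hq
  have hrange := subset_range_actWord δ hdisj
  have hlt : (actWord δ w ⁻¹' P)ᶜ.ncard < n :=
    hn ▸ Set.ncard_compl_preimage_lt hrange hne (hx₁.trans hx₂.symm) (hx₁ ▸ hp')
  obtain ⟨ws, hws, hwsP⟩ := ih _ hlt (actWord δ w ⁻¹' P) ⟨x₁, by simpa [hx₁]⟩ rfl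
  refine ⟨ws ++ [w], ?_, ?_⟩
  · simpa [or_imp, forall_and] using ⟨hws, hw⟩
  · rw [List.flatten_append, List.flatten_singleton, actSet_append, hwsP]
    exact Set.image_preimage_eq_of_subset hrange

end Automaton

/-- Theorem 1: if `Γ₁(A)` is strongly connected, then `A` is
completely reachable; more precisely, every non-empty subset `P ⊆ Q` satisfies
`P = Q·w` for some product `w` of words of defect 1. -/
theorem gamma1_strongly_connected_completely_reachable
    {Q σ : Type*} [Fintype Q] (δ : Q → σ → Q)
    (h : StronglyConnected (Gamma1 δ)) :
    completelyReachable δ ∧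
      ∀ P : Set Q, P.Nonempty →
        ∃ ws : List (List σ), (∀ u ∈ ws, defect δ u = 1) ∧
          actSet δ ws.flatten Set.univ = P := by
  have hwords := exists_defect_one_words_of_stronglyConnected δ h
  refine ⟨fun P hP => ?_, hwords⟩
  obtain ⟨ws, -, hws⟩ := hwords P hP
  exact ⟨ws.flatten, hws⟩
end

section
/- Let A = ⟨Q, Σ⟩ be a DFA such that the iteratively constructed graph Γ(A) is not strongly connected. Then A is not completely reachable; more precisely, if Γ(A) = Γ_k(A), then some subset of Q with at least |Q| − k states is not reachable in A. -/
/-!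
Suppose, towards a contradiction, that `Q \ T` is reachable for every nonempty proper `T` with
`|T| ≤ k`, and pick a sink strongly connected component of `Γ_k(A)`, of support `S`.
If `S` is nonempty and proper, a word `w` with `Q·w = Q \ S` has defect `|S| ≤ k` and a duplicate
state outside `S`; but the states of `S` are already mutually reachable in `Γ_{|S|-1}(A)`, so `S`
lies in a vertex of `Q_{|S|}` and `w` yields an edge leaving the sink component.
If `S = Q`, then `Γ_k(A)` is strongly connected. If `S = ∅`, the sink component consists of
vertices `C ∈ Q_ℓ`; such a `C` has an outgoing edge in `E_ℓ` unless `C = Q`, and then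
`Γ_{ℓ-1}(A)` was already strongly connected.
-/

open Set

section DGraph

variable {V : Type*}

theorem stronglyConnected_of_forall_mem_scc {G : DGraph V} (v : V)
    (h : ∀ u ∈ G.verts, u ∈ scc G v) : StronglyConnected G :=
  fun u hu w hw => (h u hu).2.1.trans (h w hw).2.2

theorem exists_sink_scc [Finite V] (G : DGraph V) (hG : ∀ u v, G.edge u v → v ∈ G.verts)
    (hne : G.verts.Nonempty) : ∃ v ∈ G.verts, ∀ z, GReach G v z → z ∈ scc G v := by
  obtain ⟨v, hv, hmin⟩ := exists_min_image G.verts (fun v => {u | GReach G v u}.ncard)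
    (toFinite _) hne
  refine ⟨v, hv, fun z hvz => ?_⟩
  have hz : z ∈ G.verts := by
    rcases Relation.ReflTransGen.cases_tail hvz with rfl | ⟨c, -, hcz⟩
    exacts [hv, hG c z hcz]
  have hsub : {u | GReach G z u} ⊆ {u | GReach G v u} := fun u hzu => hvz.trans hzu
  have heq := eq_of_subset_of_ncard_le hsub (hmin z hz) (toFinite _)
  have hzv : v ∈ {u | GReach G z u} := heq ▸ Relation.ReflTransGen.refl
  exact ⟨hz, hzv, hvz⟩

end DGraph

def vtxStates {Q : Type*} : Vtx Q → Set Q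
  | Sum.inl q => {q}
  | Sum.inr C => C

def IsTerminalClass {Q : Type*} (G : DGraph (Vtx Q)) (S : Set Q) : Prop :=
  ∀ x ∈ S, ∀ p, GReach G (Sum.inl x) (Sum.inl p) ↔ p ∈ S

def LargeSubsetsReachable {Q σ : Type*} (δ : Q → σ → Q) (k : ℕ) : Prop :=
  ∀ T : Set Q, T.Nonempty → T ≠ univ → T.ncard ≤ k → reachableSubset δ (univ \ T)

section Gamma

variable {Q σ : Type*} {δ : Q → σ → Q}

theorem Gamma_edge_succ {j : ℕ} {u v : Vtx Q} (h : (Gamma δ j).edge u v) :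
    (Gamma δ (j + 1)).edge u v := by
  cases j with
  | zero => exact h
  | succ j => exact Or.inl h

theorem Gamma_edge_mono {i j : ℕ} (hij : i ≤ j) {u v : Vtx Q} (h : (Gamma δ i).edge u v) :
    (Gamma δ j).edge u v := by
  induction j, hij using Nat.le_induction with
  | base => exact h
  | succ n _ ih => exact Gamma_edge_succ ih

theorem Gamma_reach_mono {i j : ℕ} (hij : i ≤ j) {u v : Vtx Q} (h : GReach (Gamma δ i) u v) :
    GReach (Gamma δ j) u v :=
  Relation.ReflTransGen.mono (fun _ _ => Gamma_edge_mono hij) _ _ h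

theorem inl_mem_Gamma_verts (m : ℕ) (q : Q) : (Sum.inl q : Vtx Q) ∈ (Gamma δ m).verts := by
  match m with
  | 0 | 1 => exact ⟨q, rfl⟩
  | m + 2 => exact Or.inl (inl_mem_Gamma_verts (m + 1) q)

theorem Gamma_edge_target_mem : ∀ {m : ℕ} {u v : Vtx Q}, (Gamma δ m).edge u v →
    v ∈ (Gamma δ m).verts
  | 0, _, _, ⟨_, p, _, hv, _⟩ | 1, _, _, ⟨_, p, _, hv, _⟩ => ⟨p, hv.symm⟩
  | _ + 2, _, _, Or.inl h => Or.inl (Gamma_edge_target_mem h)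
  | _ + 2, _, _, Or.inr (Or.inl ⟨C, hC, hv, _⟩) => Or.inr ⟨C, hC, hv.symm⟩
  | _ + 2, _, _, Or.inr (Or.inr ⟨_, _, p, _, hv, _⟩) => hv ▸ inl_mem_Gamma_verts _ p

theorem vtxStates_subset_of_Gamma_edge : ∀ {m : ℕ} {u : Vtx Q} {C : Set Q},
    (Gamma δ m).edge u (Sum.inr C) → vtxStates u ⊆ C
  | 0, _, _, ⟨_, _, _, hv, _⟩ | 1, _, _, ⟨_, _, _, hv, _⟩ => nomatch hv
  | _ + 2, _, _, Or.inl h => vtxStates_subset_of_Gamma_edge h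
  | _ + 2, _, _, Or.inr (Or.inl ⟨_, _, hv, Or.inl ⟨q, hu, hq⟩⟩) => by
    cases hv; subst hu; simpa [vtxStates] using hq
  | _ + 2, _, _, Or.inr (Or.inl ⟨_, _, hv, Or.inr ⟨D, hu, _, hDC⟩⟩) => by
    cases hv; subst hu; exact hDC.subset
  | _ + 2, _, _, Or.inr (Or.inr ⟨_, _, _, _, hv, _⟩) => nomatch hv

theorem exists_Qnext_of_inr_mem_Gamma_verts : ∀ {m : ℕ} {C : Set Q},
    Sum.inr C ∈ (Gamma δ m).verts →
      ∃ j, j + 2 ≤ m ∧ C ∈ Qnext (Gamma δ (j + 1)) (j + 2)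
  | 0, _, ⟨_, h⟩ | 1, _, ⟨_, h⟩ => nomatch h
  | _ + 2, _, Or.inl h =>
    let ⟨j, hj, hC⟩ := exists_Qnext_of_inr_mem_Gamma_verts h
    ⟨j, by omega, hC⟩
  | m + 2, _, Or.inr ⟨_, hC, h⟩ => by cases h; exact ⟨m, le_rfl, hC⟩

theorem exists_Gamma_edge_inl_of_inr_mem_verts [Finite Q] {m : ℕ} {C : Set Q}
    (hC : Sum.inr C ∈ (Gamma δ m).verts) :
    ∃ q ∈ C, (Gamma δ m).edge (Sum.inl q) (Sum.inr C) := by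
  obtain ⟨j, hjm, hCj⟩ := exists_Qnext_of_inr_mem_Gamma_verts hC
  obtain ⟨q, hq⟩ : C.Nonempty :=
    nonempty_of_ncard_ne_zero (by obtain ⟨-, -, -, h⟩ := hCj; omega)
  exact ⟨q, hq, Gamma_edge_mono hjm (Or.inr (Or.inl ⟨C, hCj, rfl, Or.inl ⟨q, rfl, hq⟩⟩))⟩

theorem exists_mem_vtxStates_of_Gamma_reach {m : ℕ} {x : Q} {v : Vtx Q}
    (h : GReach (Gamma δ m) (Sum.inl x) v) :
    ∃ q ∈ vtxStates v, GReach (Gamma δ m) (Sum.inl x) (Sum.inl q) := by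
  induction h with
  | refl => exact ⟨x, rfl, .refl⟩
  | @tail b c hxb hbc ih =>
    obtain ⟨q, hq, hxq⟩ := ih
    cases c with
    | inl p => exact ⟨p, rfl, hxb.tail hbc⟩
    | inr C => exact ⟨q, vtxStates_subset_of_Gamma_edge hbc hq, hxq⟩

theorem Gamma_reach_succ_or_exists_Qnext {m : ℕ} {x : Q} {v : Vtx Q}
    (h : GReach (Gamma δ (m + 2)) (Sum.inl x) v) :
    GReach (Gamma δ (m + 1)) (Sum.inl x) v ∨
      ∃ C ∈ Qnext (Gamma δ (m + 1)) (m + 2), ∃ q ∈ C,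
        GReach (Gamma δ (m + 2)) (Sum.inl x) (Sum.inl q) := by
  induction h with
  | refl => exact Or.inl .refl
  | @tail b c _ hbc ih =>
    rcases ih with hxb | hhub
    · obtain ⟨q, hq, hxq⟩ := exists_mem_vtxStates_of_Gamma_reach hxb
      have hxq' := Gamma_reach_mono (Nat.le_succ _) hxq
      rcases hbc with hold | ⟨C, hC, rfl, hsrc⟩ | ⟨C, hC, p, rfl, rfl, -⟩
      · exact Or.inl (hxb.tail hold)
      · have hbC : (Gamma δ (m + 2)).edge b (Sum.inr C) := Or.inr (Or.inl ⟨C, hC, rfl, hsrc⟩)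
        exact Or.inr ⟨C, hC, q, vtxStates_subset_of_Gamma_edge hbC hq, hxq'⟩
      · exact Or.inr ⟨C, hC, q, hq, hxq'⟩
    · exact Or.inr hhub

end Gamma

section TerminalClass

variable {Q σ : Type*} [Finite Q] {δ : Q → σ → Q} {S : Set Q}

theorem IsTerminalClass.of_Gamma_succ {m : ℕ} (hS : IsTerminalClass (Gamma δ (m + 2)) S)
    (hcard : S.ncard ≤ m + 2) : IsTerminalClass (Gamma δ (m + 1)) S := by
  intro x hx p
  refine ⟨fun hxp => (hS x hx p).1 (Gamma_reach_mono (Nat.le_succ _) hxp), fun hp => ?_⟩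
  rcases Gamma_reach_succ_or_exists_Qnext ((hS x hx p).2 hp) with hxp | ⟨C, hC, q, hqC, hxq⟩
  · exact hxp
  obtain ⟨v, -, rfl, hCcard⟩ := hC
  have hqS : q ∈ S := (hS x hx q).1 hxq
  have hCS : support (scc (Gamma δ (m + 1)) v) ⊆ S := fun q' hq' =>
    (hS q hqS q').1 (Gamma_reach_mono (Nat.le_succ _) (hqC.2.1.trans hq'.2.2))
  -- the component of `q` has at least `m + 2 ≥ |S|` states, all of them in `S`
  have hSC := (eq_of_subset_of_ncard_le hCS (by omega) (toFinite _)).ge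
  exact (hSC hx).2.1.trans (hSC hp).2.2

theorem IsTerminalClass.of_Gamma_le {m k : ℕ} (hS : IsTerminalClass (Gamma δ k) S)
    (hmk : m + 1 ≤ k) (hcard : S.ncard ≤ m + 2) : IsTerminalClass (Gamma δ (m + 1)) S := by
  obtain ⟨n, rfl⟩ := Nat.exists_eq_add_of_le hmk
  clear hmk
  induction n with
  | zero => exact hS
  | succ n ih =>
    rw [show m + 1 + (n + 1) = m + n + 2 by omega] at hS
    exact ih (m.add_right_comm n 1 ▸ hS.of_Gamma_succ (by omega))

theorem dupl_subset_of_isTerminalClass {k : ℕ} {w : List σ}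
    (hS : IsTerminalClass (Gamma δ k) S) (hne : S.Nonempty) (hk : 1 ≤ k) (hcard : S.ncard ≤ k)
    (hw : excl δ w = S) : dupl δ w ⊆ S := by
  obtain ⟨q₀, hq₀⟩ := hne
  intro p hp
  refine (hS q₀ hq₀ p).1 ?_
  have hdefect : defect δ w = S.ncard := by rw [defect, hw]
  obtain hone | ⟨m, hm⟩ : S.ncard = 1 ∨ ∃ m, S.ncard = m + 2 := by
    have := (ncard_pos (toFinite S)).2 ⟨q₀, hq₀⟩
    exact (Nat.lt_or_ge 1 S.ncard).symm.imp (by omega) (fun h => ⟨S.ncard - 2, by omega⟩)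
  · obtain ⟨q, rfl⟩ := ncard_eq_one.1 hone
    obtain rfl : q₀ = q := hq₀
    have hedge : (Gamma δ 1).edge (Sum.inl q₀) (Sum.inl p) :=
      ⟨q₀, p, rfl, rfl, w, hdefect.trans hone, hw, hp⟩
    exact Gamma_reach_mono hk (.single hedge)
  · have hS' := hS.of_Gamma_le (m := m) (by omega) hm.le
    set C := support (scc (Gamma δ (m + 1)) (Sum.inl q₀))
    have hSC : S ⊆ C := fun x hx =>
      ⟨inl_mem_Gamma_verts _ x, (hS' x hx q₀).2 hq₀, (hS' q₀ hq₀ x).2 hx⟩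
    have hC : C ∈ Qnext (Gamma δ (m + 1)) (m + 2) :=
      ⟨_, inl_mem_Gamma_verts _ q₀, rfl, hm ▸ ncard_le_ncard hSC (toFinite _)⟩
    have hin : (Gamma δ (m + 2)).edge (Sum.inl q₀) (Sum.inr C) :=
      Or.inr (Or.inl ⟨C, hC, rfl, Or.inl ⟨q₀, rfl, hSC hq₀⟩⟩)
    have hout : (Gamma δ (m + 2)).edge (Sum.inr C) (Sum.inl p) :=
      Or.inr (Or.inr ⟨C, hC, p, rfl, rfl, w, hdefect.trans hm, hw ▸ hSC, hp⟩)
    exact Gamma_reach_mono (by omega) ((Relation.ReflTransGen.single hin).tail hout)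

end TerminalClass

section Reachability

variable {Q σ : Type*} [Finite Q] {δ : Q → σ → Q}

theorem exists_excl_eq_of_reachableSubset_compl {T : Set Q} (hT : T.Nonempty)
    (h : reachableSubset δ (univ \ T)) :
    ∃ w, excl δ w = T ∧ ∃ p ∈ dupl δ w, p ∉ T := by
  obtain ⟨w, hw⟩ := h
  obtain ⟨t, ht⟩ := hT
  have hns : ¬ Function.Surjective (actWord δ w) := fun hs => by
    obtain ⟨q, hq⟩ := hs t
    have ht' : t ∈ actSet δ w univ := ⟨q, trivial, hq⟩
    rw [hw] at ht'
    exact ht'.2 ht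
  obtain ⟨a, b, hab, hne⟩ :=
    Function.not_injective_iff.1 (mt Finite.injective_iff_surjective.1 hns)
  have hpT : actWord δ w a ∈ univ \ T := hw ▸ mem_image_of_mem _ trivial
  refine ⟨w, ?_, _, ⟨a, b, hne, rfl, hab.symm⟩, hpT.2⟩
  rw [excl, hw, sdiff_sdiff_cancel_left (subset_univ T)]

theorem exists_Gamma_edge_inr_inl {k j : ℕ} {C : Set Q} (hR : LargeSubsetsReachable δ k)
    (hC : C ∈ Qnext (Gamma δ (j + 1)) (j + 2)) (hjk : j + 2 ≤ k) (hjn : j + 2 < Nat.card Q) :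
    ∃ p, (Gamma δ (j + 2)).edge (Sum.inr C) (Sum.inl p) := by
  obtain ⟨T, hTC, hT⟩ := exists_subset_card_eq (by obtain ⟨-, -, -, h⟩ := hC; exact h)
  have hTne : T.Nonempty := nonempty_of_ncard_ne_zero (by omega)
  have hTu : T ≠ univ := fun h => by rw [h, ncard_univ] at hT; omega
  obtain ⟨w, hw, p, hp, -⟩ :=
    exists_excl_eq_of_reachableSubset_compl hTne (hR T hTne hTu (by omega))
  exact ⟨p, Or.inr (Or.inr ⟨C, hC, p, rfl, rfl, w, by rw [defect, hw, hT], hw ▸ hTC, hp⟩)⟩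

theorem Gamma_stronglyConnected_of_univ_mem_Qnext {k m : ℕ} (hR : LargeSubsetsReachable δ k)
    (hU : univ ∈ Qnext (Gamma δ (m + 1)) (m + 2)) (hmk : m + 2 ≤ k) :
    StronglyConnected (Gamma δ (m + 1)) := by
  obtain ⟨v, -, hv, hcard⟩ := hU
  rw [ncard_univ] at hcard
  have hstate (q : Q) : Sum.inl q ∈ scc (Gamma δ (m + 1)) v := by
    have : q ∈ support (scc (Gamma δ (m + 1)) v) := hv ▸ mem_univ q
    exact this
  refine stronglyConnected_of_forall_mem_scc v fun u hu => ?_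
  cases u with
  | inl q => exact hstate q
  | inr D =>
    obtain ⟨j, hjm, hD⟩ := exists_Qnext_of_inr_mem_Gamma_verts hu
    obtain ⟨p, hDp⟩ := exists_Gamma_edge_inr_inl hR hD (by omega) (by omega)
    obtain ⟨q, -, hqD⟩ := exists_Gamma_edge_inl_of_inr_mem_verts hu
    exact ⟨hu, (Relation.ReflTransGen.single (Gamma_edge_mono hjm hDp)).trans (hstate p).2.1,
      (hstate q).2.2.tail hqD⟩

theorem eq_univ_of_isTerminalClass {k : ℕ} {S : Set Q} (hR : LargeSubsetsReachable δ k)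
    (hS : IsTerminalClass (Gamma δ k) S) (hne : S.Nonempty) (hk : 1 ≤ k)
    (hcard : S.ncard ≤ k) : S = univ := by
  by_contra hSu
  obtain ⟨w, hw, p, hp, hpS⟩ := exists_excl_eq_of_reachableSubset_compl hne (hR S hne hSu hcard)
  exact hpS (dupl_subset_of_isTerminalClass hS hne hk hcard hw hp)

theorem support_sink_scc_nonempty {k : ℕ} {v₀ : Vtx Q} (hR : LargeSubsetsReachable δ k)
    (hbefore : ∀ j, 1 ≤ j → j < k → ¬ StronglyConnected (Gamma δ j))
    (hv₀ : v₀ ∈ (Gamma δ k).verts)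
    (hsink : ∀ z, GReach (Gamma δ k) v₀ z → z ∈ scc (Gamma δ k) v₀) :
    (support (scc (Gamma δ k) v₀)).Nonempty := by
  rcases v₀ with q | C
  · exact ⟨q, hsink _ .refl⟩
  obtain ⟨j, hjk, hC⟩ := exists_Qnext_of_inr_mem_Gamma_verts hv₀
  by_cases hCu : C = univ
  · exact absurd (Gamma_stronglyConnected_of_univ_mem_Qnext hR (hCu ▸ hC) hjk)
      (hbefore (j + 1) (by omega) (by omega))
  have hjn : j + 2 < Nat.card Q := by
    obtain ⟨-, -, -, hjC⟩ := hC
    have := ncard_lt_ncard (ssubset_univ_iff.2 hCu) (toFinite _)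
    rw [ncard_univ] at this
    omega
  obtain ⟨p, hp⟩ := exists_Gamma_edge_inr_inl hR hC hjk hjn
  exact ⟨p, hsink _ (.single (Gamma_edge_mono hjk hp))⟩

theorem not_largeSubsetsReachable_of_stopsAt {k : ℕ} (hstop : stopsAt δ k)
    (hnsc : ¬ StronglyConnected (Gamma δ k)) : ¬ LargeSubsetsReachable δ k := by
  intro hR
  obtain ⟨hk, hend, hbefore⟩ := hstop
  obtain hempty | hne := (Gamma δ k).verts.eq_empty_or_nonempty
  · exact hnsc fun u hu => by simp [hempty] at hu
  obtain ⟨v₀, hv₀, hsink⟩ :=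
    exists_sink_scc (Gamma δ k) (fun _ _ => Gamma_edge_target_mem) hne
  set S := support (scc (Gamma δ k) v₀)
  have hS : IsTerminalClass (Gamma δ k) S := fun x hx p =>
    ⟨fun hxp => hsink _ (hx.2.2.trans hxp), fun hp => hx.2.1.trans hp.2.2⟩
  have hSne : S.Nonempty :=
    support_sink_scc_nonempty hR (fun j hj hjk => (hbefore j hj hjk).1) hv₀ hsink
  have hSu := eq_univ_of_isTerminalClass hR hS hSne hk (hend.resolve_left hnsc v₀ hv₀)
  have hstate (q : Q) : GReach (Gamma δ k) v₀ (Sum.inl q) := (hSu ▸ mem_univ q : q ∈ S).2.2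
  refine hnsc (stronglyConnected_of_forall_mem_scc v₀ fun u hu => hsink u ?_)
  rcases u with q | C
  · exact hstate q
  · obtain ⟨q, -, hqC⟩ := exists_Gamma_edge_inl_of_inr_mem_verts hu
    exact (hstate q).tail hqC

end Reachability

/-- Theorem 4: if the construction stops at step `k` (i.e.
`Γ(A) = Γ_k(A)`) and `Γ(A)` is not strongly connected, then `A` is not
completely reachable; more precisely, some subset of `Q` with at least
`|Q| - k` states is not reachable in `A`. -/
theorem gamma_not_strongly_connected_not_completely_reachable
    {Q σ : Type*} [Fintype Q] (δ : Q → σ → Q) (k : ℕ)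
    (hstop : stopsAt δ k) (hnsc : ¬ StronglyConnected (Gamma δ k)) :
    ¬ completelyReachable δ ∧
      ∃ P : Set Q, Fintype.card Q - k ≤ P.ncard ∧ ¬ reachableSubset δ P := by
  obtain ⟨T, hTne, hTu, hTk, hT⟩ :
      ∃ T : Set Q, T.Nonempty ∧ T ≠ univ ∧ T.ncard ≤ k ∧ ¬ reachableSubset δ (univ \ T) := by
    simpa [LargeSubsetsReachable] using not_largeSubsetsReachable_of_stopsAt hstop hnsc
  refine ⟨fun hcr => hT (hcr _ ?_), univ \ T, ?_, hT⟩
  · rw [← compl_eq_univ_sdiff]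
    exact nonempty_compl.2 hTu
  · rw [ncard_sdiff (subset_univ T), ncard_univ, Nat.card_eq_fintype_card]
    omega
end

section
/- Let A = ⟨Q, Σ⟩ be a DFA, P a nonempty proper subset of Q, and w ∈ Σ* a word of defect 1 such that the excluded state excl(w) does not belong to P and the duplicate state dupl(w) belongs to P. Then there exists a subset R ⊆ Q with |R| = |P| + 1 and R·w = P. -/
/-! Take `R` to be the full preimage of `P` under the action of `w`. As the excluded state is
not in `P`, we have `P ⊆ Q·w`, hence `R·w = P`. As the duplicate state lies in `P`, `w` maps
`Q \ R` bijectively onto `Q·w \ P`, so `|R| = |Q| - (|Q·w| - |P|) = |P| + defect w = |P| + 1`. -/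

theorem Set.ncard_preimage_of_injOn_compl {α : Type*} [Finite α] {f : α → α} {P : Set α}
    (hinj : (f ⁻¹' P)ᶜ.InjOn f) (hP : P ⊆ Set.range f) :
    (f ⁻¹' P).ncard = P.ncard + (Set.range f)ᶜ.ncard := by
  have himage : f '' (f ⁻¹' P)ᶜ = Set.range f \ P := by
    rw [← Set.preimage_compl, Set.image_preimage_eq_range_inter, Set.sdiff_eq]
  have hcompl : (f ⁻¹' P)ᶜ.ncard = (Set.range f).ncard - P.ncard := by
    rw [← hinj.ncard_image, himage, Set.ncard_sdiff hP]
  have hpre := Set.ncard_add_ncard_compl (f ⁻¹' P)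
  have hrange := Set.ncard_add_ncard_compl (Set.range f)
  have hPle := Set.ncard_le_ncard hP
  omega

section Word

variable {Q σ : Type*} (δ : Q → σ → Q) (w : List σ)

theorem actSet_univ : actSet δ w Set.univ = Set.range (actWord δ w) :=
  Set.image_univ

theorem excl_eq_compl_range : excl δ w = (Set.range (actWord δ w))ᶜ := by
  rw [excl, actSet_univ, Set.compl_eq_univ_sdiff]

theorem subset_range_of_excl_inter_eq_empty {P : Set Q} (hexcl : excl δ w ∩ P = ∅) :
    P ⊆ Set.range (actWord δ w) := by
  rw [excl_eq_compl_range, ← Set.disjoint_iff_inter_eq_empty, Set.disjoint_compl_left_iff_subset]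
    at hexcl
  exact hexcl

theorem injOn_compl_preimage_of_dupl_subset {P : Set Q} (hdupl : dupl δ w ⊆ P) :
    (actWord δ w ⁻¹' P)ᶜ.InjOn (actWord δ w) := by
  intro q₁ hq₁ q₂ _ heq
  by_contra hne
  exact hq₁ (hdupl ⟨q₁, q₂, hne, rfl, heq.symm⟩)

end Word

theorem exists_bigger_preimage_of_defect_one_general
    {Q σ : Type*} [Fintype Q] (δ : Q → σ → Q) (P : Set Q) (w : List σ)
    (hw : defect δ w = 1)
    (hexcl : excl δ w ∩ P = ∅)
    (hdupl : dupl δ w ⊆ P) :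
    ∃ R : Set Q, R.ncard = P.ncard + 1 ∧ actSet δ w R = P := by
  have hP := subset_range_of_excl_inter_eq_empty δ w hexcl
  refine ⟨actWord δ w ⁻¹' P, ?_, Set.image_preimage_eq_of_subset hP⟩
  rw [Set.ncard_preimage_of_injOn_compl (injOn_compl_preimage_of_dupl_subset δ w hdupl) hP,
    ← excl_eq_compl_range, ← defect, hw]

/-- if `P` is a nonempty proper subset of `Q` and `w` has
defect 1 with the excluded state outside `P` and the duplicate state inside
`P`, then `P = R·w` for some `R ⊆ Q` with `|R| = |P| + 1`. -/
theorem exists_bigger_preimage_of_defect_one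
    {Q σ : Type*} [Fintype Q] (δ : Q → σ → Q) (P : Set Q) (w : List σ)
    (hPne : P.Nonempty) (hPproper : P ⊂ Set.univ)
    (hw : defect δ w = 1)
    (hexcl : excl δ w ∩ P = ∅)
    (hdupl : dupl δ w ⊆ P) :
    ∃ R : Set Q, R.ncard = P.ncard + 1 ∧ actSet δ w R = P :=
  exists_bigger_preimage_of_defect_one_general δ P w hw hexcl hdupl
end

section
/- Let A = ⟨Q, Σ⟩ be a DFA, P a nonempty subset of Q, and w ∈ Σ* a word such that excl(w) ∩ P = ∅ and dupl(w) ∩ P ≠ ∅. Then there exists a subset R ⊆ Q with |R| > |P| and R·w = P. -/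
/-- if `P` is a nonempty subset of `Q` and `w` is a word with
`excl(w) ∩ P = ∅` and `dupl(w) ∩ P ≠ ∅`, then `P = R·w` for some `R ⊆ Q` with
`|R| > |P|`. -/
theorem exists_bigger_preimage
    {Q σ : Type*} [Fintype Q] (δ : Q → σ → Q) (P : Set Q) (w : List σ)
    (hPne : P.Nonempty)
    (hexcl : excl δ w ∩ P = ∅)
    (hdupl : (dupl δ w ∩ P).Nonempty) :
    ∃ R : Set Q, P.ncard < R.ncard ∧ actSet δ w R = P := by
  set f := actWord δ w
  refine ⟨f ⁻¹' P, ?_, ?_⟩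
  · have himg : f '' (f ⁻¹' P) = P := by
      apply Set.eq_of_subset_of_subset (Set.image_preimage_subset f P)
      intro p hp
      by_contra hnp
      have : p ∈ excl δ w ∩ P := by
        constructor
        · refine ⟨trivial, fun hmem => hnp ?_⟩
          obtain ⟨q, _, hq⟩ := hmem
          exact ⟨q, by simpa [f, hq] using hp, hq⟩
        · exact hp
      simp [hexcl] at this
    have hle : P.ncard ≤ (f ⁻¹' P).ncard := by
      calc P.ncard = (f '' (f ⁻¹' P)).ncard := by rw [himg]
        _ ≤ (f ⁻¹' P).ncard := Set.ncard_image_le (Set.toFinite _)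
    rcases lt_or_eq_of_le hle with h | h
    · exact h
    · exfalso
      have hinj : Set.InjOn f (f ⁻¹' P) := by
        apply Set.injOn_of_ncard_image_eq
        · rw [himg, h]
        · exact Set.toFinite _
      obtain ⟨p, ⟨q₁, q₂, hne, h1, h2⟩, hpP⟩ := hdupl
      exact hne (hinj (by simp [f, Set.mem_preimage, h1, hpP])
        (by simp [f, Set.mem_preimage, h2, hpP]) (h1.trans h2.symm))
  · show f '' (f ⁻¹' P) = P
    apply Set.eq_of_subset_of_subset (Set.image_preimage_subset f P)
    intro p hp
    by_contra hnp
    have : p ∈ excl δ w ∩ P := by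
      constructor
      · refine ⟨trivial, fun hmem => hnp ?_⟩
        obtain ⟨q, _, hq⟩ := hmem
        exact ⟨q, by simpa [f, hq] using hp, hq⟩
      · exact hp
    simp [hexcl] at this
end

section
/- For every n ≥ 3 and every k with 2 ≤ k < n, there exists a DFA B with n states that is not completely reachable and such that Γ(B) = Γ_k(B); that is, the iterative construction of Γ(B) terminates with FAILURE after exactly k steps. (The family E'_{n,k}, obtained from E_{n,k} by omitting one input letter, witnesses this.) -/
/-!
The witness has states `0, …, n-1` and letters `0, …, k-1`; letter `i` moves state `i` to
`i + 1 mod k` and fixes every other state. States `≥ k` are fixed by every word, so no word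
excludes or duplicates them and no singleton `{q}` with `q < k` is reachable. Consequently every
`Γ_j` has its edges among the cycle states `S = {0, …, k-1}` and the single subset vertex `S`:
the letters already make `S` strongly connected in `Γ₁`, so `S` is the only support of rank
`≥ 2`. Its rank is `k`, hence the construction neither succeeds nor fails before step `k`, and
fails at step `k`.
-/

section Automaton

variable {Q σ : Type*} {δ : Q → σ → Q}

theorem actWord_eq_self {q : Q} (hq : ∀ a, δ q a = q) (w : List σ) : actWord δ w q = q := by
  induction w with
  | nil => rfl
  | cons a w ih =>
    show actWord δ w (δ q a) = q
    rw [hq a, ih]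

theorem actWord_mem {S : Set Q} (hS : ∀ q ∈ S, ∀ a, δ q a ∈ S) (w : List σ) {q : Q}
    (hq : q ∈ S) : actWord δ w q ∈ S := by
  induction w generalizing q with
  | nil => exact hq
  | cons a w ih => exact ih (hS q hq a)

theorem not_completelyReachable_of_forall_eq_self {p q : Q} (hq : ∀ a, δ q a = q) (hpq : p ≠ q) :
    ¬ completelyReachable δ := by
  intro h
  obtain ⟨w, hw⟩ := h {p} (Set.singleton_nonempty p)
  have hmem : q ∈ actSet δ w Set.univ := ⟨q, trivial, actWord_eq_self hq w⟩
  rw [hw] at hmem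
  exact hpq (hmem : q = p).symm

theorem eq_of_actWord_eq_of_notMem {S : Set Q} (hS : ∀ q ∈ S, ∀ a, δ q a ∈ S)
    (hfix : ∀ q ∉ S, ∀ a, δ q a = q) (w : List σ) {p q : Q} (hp : p ∉ S)
    (h : actWord δ w q = p) : q = p := by
  by_cases hq : q ∈ S
  · exact absurd (h ▸ actWord_mem hS w hq) hp
  · rw [← h, actWord_eq_self (hfix q hq)]

theorem excl_subset {S : Set Q} (hfix : ∀ q ∉ S, ∀ a, δ q a = q) (w : List σ) :
    excl δ w ⊆ S := fun q hq => by
  by_contra hqS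
  exact hq.2 ⟨q, trivial, actWord_eq_self (hfix q hqS) w⟩

theorem dupl_subset {S : Set Q} (hS : ∀ q ∈ S, ∀ a, δ q a ∈ S)
    (hfix : ∀ q ∉ S, ∀ a, δ q a = q) (w : List σ) : dupl δ w ⊆ S := by
  rintro p ⟨q₁, q₂, hne, h₁, h₂⟩
  by_contra hp
  exact hne ((eq_of_actWord_eq_of_notMem hS hfix w hp h₁).trans
    (eq_of_actWord_eq_of_notMem hS hfix w hp h₂).symm)

theorem gamma1_edge_of_forall_ne_eq_self {a : σ} {q : Q} (hfix : ∀ p ≠ q, δ p a = p)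
    (hmove : δ q a ≠ q) : (Gamma1 δ).edge (Sum.inl q) (Sum.inl (δ q a)) := by
  have hexcl : excl δ [a] = {q} := by
    refine Set.eq_singleton_iff_unique_mem.mpr ⟨⟨trivial, ?_⟩, fun x hx => ?_⟩
    · rintro ⟨p, -, hp⟩
      by_cases hpq : p = q
      · exact hmove (hpq ▸ hp)
      · exact hpq ((hfix p hpq).symm.trans hp)
    · by_contra hxq
      exact hx.2 ⟨x, trivial, hfix x hxq⟩
  refine ⟨q, δ q a, rfl, rfl, [a], ?_, hexcl, ?_⟩
  · rw [defect, hexcl, Set.ncard_singleton]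
  · exact ⟨q, δ q a, hmove.symm, rfl, hfix _ hmove⟩

end Automaton

theorem mem_support_scc_self {Q : Type*} {G : DGraph (Vtx Q)} {p : Q}
    (hp : Sum.inl p ∈ G.verts) : p ∈ support (scc G (Sum.inl p)) :=
  ⟨hp, .refl, .refl⟩

section Confined

variable {Q σ : Type*}

def coreVtx (S : Set Q) : Set (Vtx Q) :=
  Sum.inl '' S ∪ {Sum.inr S}

@[simp]
theorem inl_mem_coreVtx {S : Set Q} {p : Q} : Sum.inl p ∈ coreVtx S ↔ p ∈ S := by
  simp [coreVtx]

structure Confined (S : Set Q) (G : DGraph (Vtx Q)) : Prop where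
  edge_mem : ∀ ⦃u v⦄, G.edge u v → u ∈ coreVtx S ∧ v ∈ coreVtx S
  inr_mem : ∀ ⦃D⦄, Sum.inr D ∈ G.verts → D = S
  inl_mem : ∀ q, Sum.inl q ∈ G.verts

namespace Confined

variable {S : Set Q} {G : DGraph (Vtx Q)}

theorem mem_of_reach_of_ne (hG : Confined S G) {u v : Vtx Q} (h : GReach G u v) (hne : u ≠ v) :
    u ∈ coreVtx S := by
  rcases Relation.ReflTransGen.cases_head h with rfl | ⟨c, hc, -⟩
  · exact absurd rfl hne
  · exact (hG.edge_mem hc).1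

theorem support_scc_subset (hG : Confined S G) {v : Vtx Q}
    (hv : 1 < (support (scc G v)).ncard) : support (scc G v) ⊆ S := by
  intro p hp
  obtain ⟨p', hp', hpp'⟩ := (support (scc G v)).exists_ne_of_one_lt_ncard hv p
  have hreach : GReach G (Sum.inl p) (Sum.inl p') := hp.2.1.trans hp'.2.2
  exact inl_mem_coreVtx.mp (hG.mem_of_reach_of_ne hreach (by simpa using hpp'.symm))

theorem ncard_support_scc_le (hG : Confined S G) (hS : S.Finite) (v : Vtx Q) :
    (support (scc G v)).ncard ≤ max 1 S.ncard := by
  by_cases hv : (support (scc G v)).ncard ≤ 1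
  · exact le_max_of_le_left hv
  · exact le_max_of_le_right (Set.ncard_le_ncard (hG.support_scc_subset (by omega)) hS)

theorem subset_support_scc (hG : Confined S G)
    (hconn : ∀ p ∈ S, ∀ q ∈ S, GReach G (Sum.inl p) (Sum.inl q)) {v : Vtx Q} {a : Q}
    (ha : a ∈ support (scc G v)) (haS : a ∈ S) : S ⊆ support (scc G v) := fun q hq =>
  ⟨hG.inl_mem q, (hconn q hq a haS).trans ha.2.1, ha.2.2.trans (hconn a haS q hq)⟩

theorem eq_of_mem_qnext (hG : Confined S G)
    (hconn : ∀ p ∈ S, ∀ q ∈ S, GReach G (Sum.inl p) (Sum.inl q)) {m : ℕ} (hm : 2 ≤ m)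
    {C : Set Q} (hC : C ∈ Qnext G m) : C = S := by
  obtain ⟨v, -, rfl, hcard⟩ := hC
  have hsub := hG.support_scc_subset (v := v) (by omega)
  obtain ⟨a, ha⟩ := Set.nonempty_of_ncard_ne_zero (by omega : (support (scc G v)).ncard ≠ 0)
  exact hsub.antisymm (hG.subset_support_scc hconn ha (hsub ha))

theorem step {δ : Q → σ → Q} (hG : Confined S G) (hdupl : ∀ w, dupl δ w ⊆ S)
    (hconn : ∀ p ∈ S, ∀ q ∈ S, GReach G (Sum.inl p) (Sum.inl q)) {m : ℕ} (hm : 2 ≤ m) :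
    Confined S (step δ G m) where
  edge_mem := by
    rintro u v (h | ⟨C, hC, rfl, h⟩ | ⟨C, hC, p, rfl, rfl, w, -, -, hp⟩)
    · exact hG.edge_mem h
    · obtain rfl := hG.eq_of_mem_qnext hconn hm hC
      rcases h with ⟨q, rfl, hq⟩ | ⟨D, rfl, hD, hDC⟩
      · exact ⟨inl_mem_coreVtx.mpr hq, Or.inr rfl⟩
      · exact absurd (hG.inr_mem hD ▸ hDC) (lt_irrefl _)
    · obtain rfl := hG.eq_of_mem_qnext hconn hm hC
      exact ⟨Or.inr rfl, inl_mem_coreVtx.mpr (hdupl w hp)⟩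
  inr_mem := by
    rintro D (hD | ⟨C, hC, hCD⟩)
    · exact hG.inr_mem hD
    · cases hCD
      exact hG.eq_of_mem_qnext hconn hm hC
  inl_mem q := Or.inl (hG.inl_mem q)

theorem not_stronglyConnected (hG : Confined S G) {p q : Q} (hp : p ∈ S) (hq : q ∉ S) :
    ¬ StronglyConnected G := fun hSC =>
  hq <| inl_mem_coreVtx.mp <| hG.mem_of_reach_of_ne
    (hSC _ (hG.inl_mem q) _ (hG.inl_mem p)) (by rintro ⟨⟩; exact hq hp)

end Confined

variable {δ : Q → σ → Q}

theorem gamma_edge_of_gamma1_edge {u v : Vtx Q} (h : (Gamma1 δ).edge u v) :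
    ∀ j, (Gamma δ j).edge u v
  | 0 => h
  | 1 => h
  | j + 2 => Or.inl (gamma_edge_of_gamma1_edge h (j + 1))

theorem GReach.gamma_of_gamma1 {u v : Vtx Q} (h : GReach (Gamma1 δ) u v) (j : ℕ) :
    GReach (Gamma δ j) u v :=
  Relation.ReflTransGen.mono (fun _ _ he => gamma_edge_of_gamma1_edge he j) _ _ h

theorem confined_gamma1 {S : Set Q} (hexcl : ∀ w, excl δ w ⊆ S) (hdupl : ∀ w, dupl δ w ⊆ S) :
    Confined S (Gamma1 δ) where
  edge_mem := by
    rintro u v ⟨q, p, rfl, rfl, w, -, hw, hp⟩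
    exact ⟨inl_mem_coreVtx.mpr (hexcl w (hw ▸ rfl)), inl_mem_coreVtx.mpr (hdupl w hp)⟩
  inr_mem := by rintro D ⟨q, ⟨⟩⟩
  inl_mem q := ⟨q, rfl⟩

theorem confined_gamma {S : Set Q} (hexcl : ∀ w, excl δ w ⊆ S) (hdupl : ∀ w, dupl δ w ⊆ S)
    (hconn : ∀ p ∈ S, ∀ q ∈ S, GReach (Gamma1 δ) (Sum.inl p) (Sum.inl q)) :
    ∀ j, Confined S (Gamma δ j)
  | 0 => confined_gamma1 hexcl hdupl
  | 1 => confined_gamma1 hexcl hdupl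
  | j + 2 => (confined_gamma hexcl hdupl hconn (j + 1)).step hdupl
      (fun p hp q hq => (hconn p hp q hq).gamma_of_gamma1 _) (by omega)

end Confined

section CycleDFA

variable {n k : ℕ}

def cycleStates (n k : ℕ) : Set (Fin n) := {q | (q : ℕ) < k}

def cycleDFA (hkn : k < n) (q : Fin n) (i : Fin k) : Fin n :=
  if (q : ℕ) = i then ⟨(i + 1) % k, (Nat.mod_lt _ i.pos).trans hkn⟩ else q

theorem cycleDFA_of_ne (hkn : k < n) {q : Fin n} {i : Fin k} (h : (q : ℕ) ≠ i) :
    cycleDFA hkn q i = q :=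
  if_neg h

theorem cycleDFA_mem (hkn : k < n) (q : Fin n) (hq : q ∈ cycleStates n k) (i : Fin k) :
    cycleDFA hkn q i ∈ cycleStates n k := by
  unfold cycleDFA
  split
  · exact Nat.mod_lt _ i.pos
  · exact hq

theorem cycleDFA_of_notMem (hkn : k < n) (q : Fin n) (hq : q ∉ cycleStates n k) (i : Fin k) :
    cycleDFA hkn q i = q :=
  cycleDFA_of_ne hkn fun h => hq (show (q : ℕ) < k from h ▸ i.isLt)

theorem gamma1_edge_cycleDFA (hk2 : 2 ≤ k) (hkn : k < n) {i j : ℕ} (hi : i < k) (hj : j < k)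
    (hij : j = (i + 1) % k) :
    (Gamma1 (cycleDFA hkn)).edge (Sum.inl ⟨i, hi.trans hkn⟩) (Sum.inl ⟨j, hj.trans hkn⟩) := by
  subst hij
  have hmove : (i + 1) % k ≠ i := by
    rcases Nat.lt_or_ge (i + 1) k with h | h
    · rw [Nat.mod_eq_of_lt h]; omega
    · rw [show i + 1 = k by omega, Nat.mod_self]; omega
  have hstep : cycleDFA hkn ⟨i, hi.trans hkn⟩ ⟨i, hi⟩ = ⟨(i + 1) % k, hj.trans hkn⟩ := if_pos rfl
  have hedge := gamma1_edge_of_forall_ne_eq_self (q := ⟨i, hi.trans hkn⟩) (a := ⟨i, hi⟩)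
    (fun p hp => cycleDFA_of_ne hkn fun h => hp (Fin.ext h))
    (by rw [hstep]; exact fun h => hmove (Fin.mk.inj h))
  rwa [hstep] at hedge

theorem greach_gamma1_cycleDFA (hk2 : 2 ≤ k) (hkn : k < n) {p q : Fin n}
    (hp : p ∈ cycleStates n k) (hq : q ∈ cycleStates n k) :
    GReach (Gamma1 (cycleDFA hkn)) (Sum.inl p) (Sum.inl q) := by
  have hup : ∀ i j (hij : i ≤ j) (hj : j < k),
      GReach (Gamma1 (cycleDFA hkn)) (Sum.inl ⟨i, by omega⟩) (Sum.inl ⟨j, hj.trans hkn⟩) := by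
    intro i j hij
    induction j, hij using Nat.le_induction with
    | base => exact fun _ => .refl
    | succ j _ ih =>
      exact fun hj => (ih (by omega)).tail
        (gamma1_edge_cycleDFA hk2 hkn (by omega) hj (Nat.mod_eq_of_lt hj).symm)
  have hwrap := gamma1_edge_cycleDFA hk2 hkn (i := k - 1) (j := 0) (by omega) (by omega)
    (by rw [Nat.sub_add_cancel (by omega), Nat.mod_self])
  have hp' : (p : ℕ) < k := hp
  have hq' : (q : ℕ) < k := hq
  exact ((hup p (k - 1) (by omega) (by omega)).tail hwrap).trans (hup 0 q (by omega) hq')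

theorem ncard_cycleStates (hkn : k < n) : (cycleStates n k).ncard = k := by
  have h : cycleStates n k = Set.range (Fin.castLE hkn.le) := by
    ext q
    exact ⟨fun hq => ⟨⟨q, hq⟩, rfl⟩, by rintro ⟨i, rfl⟩; exact i.isLt⟩
  rw [h, ← Set.image_univ, Set.ncard_image_of_injective _ (Fin.castLE_injective _),
    Set.ncard_univ, Nat.card_eq_fintype_card, Fintype.card_fin]

end CycleDFA

theorem exists_not_completely_reachable_failure_at_k_general
    (n k : ℕ) (hk2 : 2 ≤ k) (hkn : k < n) :
    ∃ (σ : Type) (_ : Fintype σ) (δ : Fin n → σ → Fin n),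
      ¬ completelyReachable δ ∧ stopsAt δ k ∧
      ¬ StronglyConnected (Gamma δ k) ∧ failsAt δ k := by
  have h0 : (⟨0, by omega⟩ : Fin n) ∈ cycleStates n k := show 0 < k by omega
  have hk : (⟨k, hkn⟩ : Fin n) ∉ cycleStates n k := lt_irrefl k
  have hfix : ∀ q ∉ cycleStates n k, ∀ i, cycleDFA hkn q i = q := cycleDFA_of_notMem hkn
  have hconn : ∀ j, ∀ p ∈ cycleStates n k, ∀ q ∈ cycleStates n k,
      GReach (Gamma (cycleDFA hkn) j) (Sum.inl p) (Sum.inl q) := fun j _ hp _ hq =>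
    (greach_gamma1_cycleDFA hk2 hkn hp hq).gamma_of_gamma1 j
  have hconf : ∀ j, Confined (cycleStates n k) (Gamma (cycleDFA hkn) j) :=
    confined_gamma (excl_subset hfix) (dupl_subset (cycleDFA_mem hkn) hfix)
      fun _ hp _ hq => greach_gamma1_cycleDFA hk2 hkn hp hq
  have hnotSC : ∀ j, ¬ StronglyConnected (Gamma (cycleDFA hkn) j) := fun j =>
    (hconf j).not_stronglyConnected h0 hk
  have hfails : failsAt (cycleDFA hkn) k := fun v _ => by
    have := (hconf k).ncard_support_scc_le (Set.toFinite _) v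
    rw [ncard_cycleStates hkn] at this
    omega
  have hnotfails : ∀ j < k, ¬ failsAt (cycleDFA hkn) j := fun j hj hfail => by
    have hsub := (hconf j).subset_support_scc (hconn j)
      (mem_support_scc_self ((hconf j).inl_mem _)) h0
    have := (Set.ncard_le_ncard hsub).trans (hfail _ ((hconf j).inl_mem _))
    rw [ncard_cycleStates hkn] at this
    omega
  refine ⟨Fin k, inferInstance, cycleDFA hkn, ?_,
    ⟨by omega, Or.inr hfails, fun j _ hj => ⟨hnotSC j, hnotfails j hj⟩⟩, hnotSC k, hfails⟩
  exact not_completelyReachable_of_forall_eq_self (hfix _ hk) (p := ⟨0, by omega⟩)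
    (by simp [Fin.ext_iff]; omega)

/-- for all `n ≥ 3` and `2 ≤ k < n` there is a DFA `B` with
`n` states that is not completely reachable and such that the iterative
construction of `Γ(B)` terminates with FAILURE after exactly `k` steps, i.e.
`Γ(B) = Γ_k(B)` is not strongly connected and every SCC of `Γ_k(B)` has rank
at most `k`.  (The family `E'_{n,k}` witnesses this.) -/
theorem exists_not_completely_reachable_failure_at_k
    (n k : ℕ) (hn : 3 ≤ n) (hk2 : 2 ≤ k) (hkn : k < n) :
    ∃ (σ : Type) (_ : Fintype σ) (δ : Fin n → σ → Fin n),
      ¬ completelyReachable δ ∧ stopsAt δ k ∧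
      ¬ StronglyConnected (Gamma δ k) ∧ failsAt δ k :=
  exists_not_completely_reachable_failure_at_k_general n k hk2 hkn
end

section
/- Let A = ⟨Q, Σ⟩ be a DFA with Γ(A) = Γ_k(A), let w ∈ Σ* have defect ℓ ≤ k, and suppose (C, p) is an edge of E_ℓ enforced by w (i.e., C ∈ Q_ℓ, C ⊇ excl(w), p ∈ dupl(w); for ℓ = 1, C = {excl(w)}). Then for every state q ∈ excl(w), the vertex p is reachable from the vertex q by a directed path in the graph Γ(A). -/
lemma gamma_edge_succ {Q σ : Type*} (δ : Q → σ → Q) (n : ℕ) {u v : Vtx Q}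
    (h : (Gamma δ n).edge u v) : (Gamma δ (n + 1)).edge u v := by
  match n with
  | 0 => exact h
  | 1 => exact Or.inl h
  | (m + 2) => exact Or.inl h

lemma gamma_edge_mono {Q σ : Type*} (δ : Q → σ → Q) {m n : ℕ} (hmn : m ≤ n)
    {u v : Vtx Q} (h : (Gamma δ m).edge u v) : (Gamma δ n).edge u v := by
  induction n with
  | zero => simpa [Nat.le_zero.mp hmn] using h
  | succ n ih =>
    rcases Nat.lt_or_ge m (n + 1) with h' | h'
    · exact gamma_edge_succ δ n (ih (Nat.lt_succ_iff.mp h'))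
    · have : m = n + 1 := le_antisymm hmn h'
      subst this; exact h

/-- suppose the construction stops at step `k` (so
`Γ(A) = Γ_k(A)`), let `w` be a word of defect `ℓ ≤ k`, and let `(C, p)` be an
edge of `E_ℓ` enforced by `w` (for `ℓ = 1` the vertex `C` is the excluded
state itself, i.e. `C = excl w`; for `ℓ ≥ 2`, `C ∈ Q_ℓ`; in both cases
`excl w ⊆ C` and `p ∈ dupl w`).  Then `p` is reachable in `Γ(A)` from every
state `q ∈ excl w` by a directed path. -/
theorem dupl_reachable_from_excl
    {Q σ : Type*} [Fintype Q] (δ : Q → σ → Q) (k ℓ : ℕ)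
    (hstop : stopsAt δ k) (hl : 1 ≤ ℓ) (hlk : ℓ ≤ k)
    (w : List σ) (hw : defect δ w = ℓ)
    (C : Set Q)
    (hC : (ℓ = 1 ∧ C = excl δ w) ∨ (2 ≤ ℓ ∧ C ∈ Qnext (Gamma δ (ℓ - 1)) ℓ))
    (hCw : excl δ w ⊆ C) (p : Q) (hp : p ∈ dupl δ w) :
    ∀ q ∈ excl δ w, GReach (Gamma δ k) (Sum.inl q) (Sum.inl p) := by
  intro q hq
  rcases hC with ⟨h1, rfl⟩ | ⟨h2, hCQ⟩
  · -- ℓ = 1 : direct edge in Γ₁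
    subst h1
    have hcard : (excl δ w).ncard = 1 := hw
    obtain ⟨a, ha⟩ := Set.ncard_eq_one.mp hcard
    have hqa : q = a := by rw [ha] at hq; exact hq
    have hedge : (Gamma δ 1).edge (Sum.inl q) (Sum.inl p) := by
      exact ⟨q, p, rfl, rfl, w, hw, by rw [ha, hqa], hp⟩
    exact Relation.ReflTransGen.single (gamma_edge_mono δ hlk hedge)
  · -- ℓ ≥ 2 : path q → C → p in Γ_ℓ
    obtain ⟨m, rfl⟩ : ∃ m, ℓ = m + 2 := ⟨ℓ - 2, by omega⟩
    have hG : Gamma δ (m + 2) = step δ (Gamma δ (m + 1)) (m + 2) := rfl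
    have hCQ' : C ∈ Qnext (Gamma δ (m + 1)) (m + 2) := by
      simpa using hCQ
    have e1 : (Gamma δ (m + 2)).edge (Sum.inl q) (Sum.inr C) := by
      rw [hG]
      exact Or.inr (Or.inl ⟨C, hCQ', rfl, Or.inl ⟨q, rfl, hCw hq⟩⟩)
    have e2 : (Gamma δ (m + 2)).edge (Sum.inr C) (Sum.inl p) := by
      rw [hG]
      exact Or.inr (Or.inr ⟨C, hCQ', p, rfl, rfl, w, hw, hCw, hp⟩)
    exact Relation.ReflTransGen.head (gamma_edge_mono δ hlk e1)
      (Relation.ReflTransGen.single (gamma_edge_mono δ hlk e2))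
end
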